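/- arXiv:0710.3949 — 6 statements merged into one kernel-verified Lean document; each statement's English description precedes it below -/
import Mathlib

section
/- Let G be a symmetric 2×2 real matrix satisfying |2·G₀₁| < |G₀₀ + G₁₁|. Then there exists a real number φ such that, for the Lorentz boost matrix S(φ) with entries cosh φ, sinh φ, sinh φ, cosh φ, both S(φ)ᵀ · J · S(φ) = J and the matrix S(φ)ᵀ · G · S(φ) is diagonal. Hence the two metrics given by J and G are simultaneously diagonalized by a Lorentz boost. -/
open Matrix

/-- The Minkowski metric matrix `diag(1, -1)`. -/
def Jmat : Matrix (Fin 2) (Fin 2) ℝ := !![1, 0; 0, -1]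

/-- The Lorentz boost matrix with parameter `φ`. -/
noncomputable def boost (φ : ℝ) : Matrix (Fin 2) (Fin 2) ℝ :=
  !![Real.cosh φ, Real.sinh φ; Real.sinh φ, Real.cosh φ]

/-!
The boost `S(φ)` preserves `J` because `cosh² - sinh² = 1`. For symmetric `G`, the off-diagonal
entry of `S(φ)ᵀ G S(φ)` is `((G₀₀ + G₁₁) sinh 2φ + 2 G₀₁ cosh 2φ) / 2`, which vanishes when
`tanh 2φ = -2 G₀₁ / (G₀₀ + G₁₁)`; the hypothesis says exactly that this ratio lies in `(-1, 1)`,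
the range of `tanh`.
-/

open Real

theorem Matrix.IsSymm.transpose_mul_mul {n α : Type*} [Fintype n] [CommSemiring α]
    {A : Matrix n n α} (hA : A.IsSymm) (B : Matrix n n α) : (Bᵀ * A * B).IsSymm := by
  simp only [IsSymm, transpose_mul, transpose_transpose, hA.eq, Matrix.mul_assoc]

theorem Matrix.IsSymm.isDiag_of_apply_zero_one {α : Type*} [Zero α]
    {A : Matrix (Fin 2) (Fin 2) α} (hA : A.IsSymm) (h : A 0 1 = 0) : A.IsDiag := by
  intro i j hij
  fin_cases i <;> fin_cases j
  · exact absurd rfl hij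
  · exact h
  · exact (hA.apply 0 1).trans h
  · exact absurd rfl hij

theorem exists_mul_sinh_add_mul_cosh_eq_zero {x y : ℝ} (h : |y| < |x|) :
    ∃ ψ, x * sinh ψ + y * cosh ψ = 0 := by
  have hx : x ≠ 0 := abs_pos.mp ((abs_nonneg y).trans_lt h)
  have hratio : -y / x ∈ Set.Ioo (-1) 1 := by
    rw [Set.mem_Ioo, ← abs_lt, abs_div, abs_neg, div_lt_one (abs_pos.mpr hx)]
    exact h
  obtain ⟨ψ, -, hψ⟩ := tanh_surjOn hratio
  refine ⟨ψ, ?_⟩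
  rw [tanh_eq_sinh_div_cosh, div_eq_div_iff (cosh_pos ψ).ne' hx] at hψ
  linear_combination hψ

theorem boost_transpose (φ : ℝ) : (boost φ)ᵀ = boost φ := by
  ext i j
  fin_cases i <;> fin_cases j <;> rfl

theorem boost_transpose_mul_Jmat_mul_boost (φ : ℝ) : (boost φ)ᵀ * Jmat * boost φ = Jmat := by
  have hpyth := cosh_sq_sub_sinh_sq φ
  rw [boost_transpose, boost, Jmat, mul_fin_two, mul_fin_two]
  ext i j
  fin_cases i <;> fin_cases j <;>
    simp only [Fin.zero_eta, Fin.mk_one, of_apply, cons_val', cons_val_zero, cons_val_one,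
      empty_val', cons_val_fin_one] <;>
    linarith

theorem boost_transpose_mul_mul_boost_apply_zero_one (G : Matrix (Fin 2) (Fin 2) ℝ)
    (hG : G.IsSymm) (φ : ℝ) :
    ((boost φ)ᵀ * G * boost φ) 0 1 =
      ((G 0 0 + G 1 1) * sinh (2 * φ) + 2 * G 0 1 * cosh (2 * φ)) / 2 := by
  rw [boost_transpose, sinh_two_mul, cosh_two_mul, eta_fin_two G, boost, mul_fin_two,
    mul_fin_two, ← hG.apply 0 1]
  simp only [of_apply, cons_val', cons_val_zero, cons_val_one, empty_val', cons_val_fin_one]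
  ring

/-- If `G` is a symmetric `2×2` real matrix with `|2 G₀₁| < |G₀₀ + G₁₁|`, then some Lorentz
boost simultaneously preserves `J = diag(1,-1)` and diagonalizes `G`. -/
theorem simultaneous_diagonalization_subcase1 (G : Matrix (Fin 2) (Fin 2) ℝ) (hG : Gᵀ = G)
    (h : |2 * G 0 1| < |G 0 0 + G 1 1|) :
    ∃ φ : ℝ, (boost φ)ᵀ * Jmat * boost φ = Jmat ∧
      ((boost φ)ᵀ * G * boost φ).IsDiag := by
  obtain ⟨ψ, hψ⟩ := exists_mul_sinh_add_mul_cosh_eq_zero h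
  refine ⟨ψ / 2, boost_transpose_mul_Jmat_mul_boost _, ?_⟩
  apply (IsSymm.transpose_mul_mul hG _).isDiag_of_apply_zero_one
  rw [boost_transpose_mul_mul_boost_apply_zero_one G hG, mul_div_cancel₀ ψ two_ne_zero, hψ,
    zero_div]
end

section
/- Let G be a symmetric 2×2 real matrix satisfying |2·G₀₁| > |G₀₀ + G₁₁|. Then there exists a real number φ such that, for the Lorentz boost matrix S(φ) with entries cosh φ, sinh φ, sinh φ, cosh φ, one has S(φ)ᵀ · J · S(φ) = J and the matrix G̃ = S(φ)ᵀ · G · S(φ) satisfies G̃₀₀ + G̃₁₁ = 0, i.e., G̃ has the form with entries (a, b; b, −a) for some real a and some real b ≠ 0. -/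
open Matrix

/-!
Congruence by the boost `S(φ)` acts on the pair `(x, y)` = (trace, sum of the off-diagonal
entries) of a `2×2` matrix as the hyperbolic rotation by `2φ`, so it preserves `y² - x²`.
When `|x| < |y|`, the rotation by `ψ = artanh (-x / y)` makes the trace vanish, and the invariant
then forces the new off-diagonal entry `b` to satisfy `(2b)² = y² - x² > 0`.
-/

open Real

section BoostCongr

variable (G : Matrix (Fin 2) (Fin 2) ℝ) (φ : ℝ)

theorem boost_congr_trace :
    ((boost φ)ᵀ * G * boost φ) 0 0 + ((boost φ)ᵀ * G * boost φ) 1 1 =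
      (G 0 0 + G 1 1) * cosh (2 * φ) + (G 0 1 + G 1 0) * sinh (2 * φ) := by
  rw [boost_transpose]
  simp only [boost, cosh_two_mul, sinh_two_mul, mul_apply, Fin.sum_univ_two, of_apply,
    cons_val_zero, cons_val_one, cons_val']
  ring

theorem boost_congr_offDiag :
    ((boost φ)ᵀ * G * boost φ) 0 1 + ((boost φ)ᵀ * G * boost φ) 1 0 =
      (G 0 0 + G 1 1) * sinh (2 * φ) + (G 0 1 + G 1 0) * cosh (2 * φ) := by
  rw [boost_transpose]
  simp only [boost, cosh_two_mul, sinh_two_mul, mul_apply, Fin.sum_univ_two, of_apply,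
    cons_val_zero, cons_val_one, cons_val']
  ring

end BoostCongr

theorem hyperbolic_rotation_sq_sub_sq (x y ψ : ℝ) :
    (x * sinh ψ + y * cosh ψ) ^ 2 - (x * cosh ψ + y * sinh ψ) ^ 2 = y ^ 2 - x ^ 2 := by
  linear_combination (y ^ 2 - x ^ 2) * cosh_sq_sub_sinh_sq ψ

theorem exists_mul_cosh_add_mul_sinh_eq_zero {x y : ℝ} (h : |x| < |y|) :
    ∃ ψ : ℝ, x * cosh ψ + y * sinh ψ = 0 := by
  have hy : y ≠ 0 := abs_pos.mp ((abs_nonneg x).trans_lt h)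
  have ht : -x / y ∈ Set.Ioo (-1 : ℝ) 1 := by
    rw [Set.mem_Ioo, ← abs_lt, abs_div, abs_neg, div_lt_one (abs_pos.mpr hy)]
    exact h
  refine ⟨artanh (-x / y), ?_⟩
  rw [sinh_artanh ht, cosh_artanh ht]
  field_simp
  ring

/-- If `G` is a symmetric `2×2` real matrix with `|2 G₀₁| > |G₀₀ + G₁₁|`, then some Lorentz
boost preserves `J = diag(1,-1)` and brings `G` to the trace-free form `(a, b; b, -a)`
with `b ≠ 0`. -/
theorem simultaneous_reduction_subcase2 (G : Matrix (Fin 2) (Fin 2) ℝ) (hG : Gᵀ = G)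
    (h : |2 * G 0 1| > |G 0 0 + G 1 1|) :
    ∃ φ : ℝ, (boost φ)ᵀ * Jmat * boost φ = Jmat ∧
      ((boost φ)ᵀ * G * boost φ) 0 0 + ((boost φ)ᵀ * G * boost φ) 1 1 = 0 ∧
      ∃ a b : ℝ, b ≠ 0 ∧ (boost φ)ᵀ * G * boost φ = !![a, b; b, -a] := by
  have hG10 : G 1 0 = G 0 1 := congrFun (congrFun hG 0) 1
  obtain ⟨ψ, hψ⟩ := exists_mul_cosh_add_mul_sinh_eq_zero h
  set M := (boost (ψ / 2))ᵀ * G * boost (ψ / 2) with hM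
  have hM10 : M 1 0 = M 0 1 := by
    have hMsymm : Mᵀ = M := by
      simp only [hM, transpose_mul, transpose_transpose, hG, Matrix.mul_assoc]
    exact congrFun (congrFun hMsymm 0) 1
  have htrace : M 0 0 + M 1 1 = 0 := by
    rw [hM, boost_congr_trace, hG10, mul_div_cancel₀ ψ two_ne_zero]
    linear_combination hψ
  have hoff : 2 * M 0 1 = (G 0 0 + G 1 1) * sinh ψ + 2 * G 0 1 * cosh ψ := by
    have h' := boost_congr_offDiag G (ψ / 2)
    rw [← hM, hM10, hG10, mul_div_cancel₀ ψ two_ne_zero] at h'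
    linear_combination h'
  have hb : M 0 1 ≠ 0 := by
    intro hb0
    have hinv := hyperbolic_rotation_sq_sub_sq (G 0 0 + G 1 1) (2 * G 0 1) ψ
    rw [← hoff, hψ, hb0] at hinv
    nlinarith [sq_lt_sq.mpr h]
  refine ⟨ψ / 2, boost_transpose_mul_Jmat_mul_boost _, htrace, M 0 0, M 0 1, hb, ?_⟩
  rw [← hM]
  nth_rewrite 1 [Matrix.eta_fin_two M]
  rw [hM10, eq_neg_of_add_eq_zero_right htrace]
end

section
/- Let G be a symmetric 2×2 real matrix with G₁₁ = −G₀₀ and G₀₁ ≠ 0. Then there is no invertible 2×2 real matrix S such that both Sᵀ · J · S and Sᵀ · G · S are diagonal matrices; i.e., the metrics given by J and G cannot be diagonalized simultaneously in any basis. -/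
open Matrix

/-!
For columns `u`, `v` of `S`, the off-diagonal entry of `Sᵀ * J * S` is `u₀v₀ - u₁v₁` and, since
`G = G₀₀ • J + G₀₁ • !![0, 1; 1, 0]`, that of `Sᵀ * G * S` is `G₀₀ (u₀v₀ - u₁v₁) + G₀₁ (u₀v₁ + u₁v₀)`.
These two bilinear forms are the real and imaginary parts of `(u₀ + i u₁)(v₀ + i v₁)`, so if both
vanish one of the columns is zero and `S` is singular.
-/

theorem Complex.mk_eq_zero_or_mk_eq_zero {x y z w : ℝ} (hre : x * z - y * w = 0)
    (him : x * w + y * z = 0) : (x = 0 ∧ y = 0) ∨ (z = 0 ∧ w = 0) := by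
  have hprod : (⟨x, y⟩ : ℂ) * ⟨z, w⟩ = 0 := Complex.ext (by simpa using hre) (by simpa using him)
  simpa [Complex.ext_iff] using hprod

theorem Matrix.transpose_mul_Jmat_mul_apply_zero_one (S : Matrix (Fin 2) (Fin 2) ℝ) :
    (Sᵀ * Jmat * S) 0 1 = S 0 0 * S 0 1 - S 1 0 * S 1 1 := by
  simp [Jmat, mul_apply, Fin.sum_univ_two, sub_eq_add_neg]

theorem Matrix.transpose_mul_mul_apply_zero_one_of_symm_of_traceless {R : Type*} [CommRing R]
    (S G : Matrix (Fin 2) (Fin 2) R) (h10 : G 1 0 = G 0 1) (h11 : G 1 1 = -G 0 0) :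
    (Sᵀ * G * S) 0 1 =
      G 0 0 * (S 0 0 * S 0 1 - S 1 0 * S 1 1) + G 0 1 * (S 0 0 * S 1 1 + S 1 0 * S 0 1) := by
  simp only [mul_apply, Fin.sum_univ_two, transpose_apply, h10, h11]
  ring

/-- If `G` is a symmetric `2×2` real matrix with `G₁₁ = -G₀₀` and `G₀₁ ≠ 0`, then there is no
invertible matrix `S` making both `Sᵀ * J * S` and `Sᵀ * G * S` diagonal: the two metrics
cannot be diagonalized simultaneously in any basis. -/
theorem not_simultaneously_diagonalizable (G : Matrix (Fin 2) (Fin 2) ℝ) (hG : Gᵀ = G)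
    (h11 : G 1 1 = -G 0 0) (h01 : G 0 1 ≠ 0) :
    ¬ ∃ S : Matrix (Fin 2) (Fin 2) ℝ, IsUnit S ∧
      (Sᵀ * Jmat * S).IsDiag ∧ (Sᵀ * G * S).IsDiag := by
  rintro ⟨S, hS, hJ, hGd⟩
  have hre : S 0 0 * S 0 1 - S 1 0 * S 1 1 = 0 :=
    (transpose_mul_Jmat_mul_apply_zero_one S).symm.trans (hJ zero_ne_one)
  have him : S 0 0 * S 1 1 + S 1 0 * S 0 1 = 0 := by
    have hG01 : (Sᵀ * G * S) 0 1 = 0 := hGd zero_ne_one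
    rw [transpose_mul_mul_apply_zero_one_of_symm_of_traceless S G (congrFun₂ hG 0 1) h11, hre] at hG01
    simpa [h01] using hG01
  have hdet : S.det ≠ 0 := (isUnit_iff_isUnit_det S).mp hS |>.ne_zero
  rcases Complex.mk_eq_zero_or_mk_eq_zero hre him with ⟨h0, h1⟩ | ⟨h0, h1⟩ <;>
    simp [det_fin_two, h0, h1] at hdet
end

section
/- Theorem 3.4: Let G be a symmetric 2×2 real matrix and F = J · G the matrix of the associated operator. If (tr F)² = 4·det F and G₀₀ + G₁₁ > 0, then there exist an invertible 2×2 real matrix S and a real number a such that Sᵀ · J · S is the matrix with rows (0, 1) and (1, 0), and Sᵀ · G · S is the matrix with rows (1, a) and (a, 0). -/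
open Matrix

/-!
Write `G = !![p, q; q, r]`. The discriminant of `F = Jmat * G` is `(p + r)² - (2q)²`, so it
vanishes exactly when `p + r = 2eq` for some `e = ±1`, i.e. when the `Jmat`-null vector `(1, -e)`
is also `G`-null. The other `Jmat`-null vector `(1, e)` then has `G`-square `2(p + r) > 0`;
normalising it to `G`-square `1` by `c = √(2(p + r))` and scaling `(1, -e)` so that the two
vectors have `Jmat`-product `1` gives the required basis.
-/

lemma transpose_fin_two_of {α : Type*} (a b c d : α) : !![a, b; c, d]ᵀ = !![a, c; b, d] := by
  ext i j
  fin_cases i <;> fin_cases j <;> rfl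

lemma Matrix.IsSymm.exists_eq_fin_two {α : Type*} {G : Matrix (Fin 2) (Fin 2) α}
    (hG : G.IsSymm) : ∃ p q r, G = !![p, q; q, r] :=
  ⟨G 0 0, G 0 1, G 1 1, (eta_fin_two G).trans (by rw [hG.apply 0 1])⟩

lemma trace_sq_sub_four_det_Jmat_mul (p q r : ℝ) :
    (Jmat * !![p, q; q, r]).trace ^ 2 - 4 * (Jmat * !![p, q; q, r]).det
      = (p + r) ^ 2 - (2 * q) ^ 2 := by
  simp only [Jmat, mul_fin_two, trace_fin_two_of, det_fin_two_of]
  ring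

noncomputable def lightconeBasis (e c : ℝ) : Matrix (Fin 2) (Fin 2) ℝ :=
  !![c⁻¹, c / 2; e / c, -(e * c) / 2]

section lightconeBasis

variable {e c : ℝ}

lemma det_lightconeBasis (e : ℝ) (hc : c ≠ 0) : (lightconeBasis e c).det = -e := by
  rw [lightconeBasis, det_fin_two_of]
  field_simp
  ring

lemma isUnit_lightconeBasis (he : e ^ 2 = 1) (hc : c ≠ 0) : IsUnit (lightconeBasis e c) := by
  rw [isUnit_iff_isUnit_det, det_lightconeBasis e hc, isUnit_iff_ne_zero, neg_ne_zero]
  rintro rfl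
  norm_num at he

lemma lightconeBasis_transpose_mul_Jmat_mul (he : e ^ 2 = 1) (hc : c ≠ 0) :
    (lightconeBasis e c)ᵀ * Jmat * lightconeBasis e c = !![0, 1; 1, 0] := by
  simp only [lightconeBasis, Jmat, transpose_fin_two_of, mul_fin_two,
    EmbeddingLike.apply_eq_iff_eq, vecCons_inj, and_true]
  field_simp
  refine ⟨⟨?_, ?_⟩, ?_, ?_⟩
  · linear_combination -he
  · linear_combination he
  · linear_combination he
  · linear_combination -c ^ 2 * he

lemma lightconeBasis_transpose_mul_mul {p q r : ℝ} (he : e ^ 2 = 1) (hc : c ≠ 0)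
    (hc2 : c ^ 2 = 2 * (p + r)) (hnull : p + r = 2 * e * q) :
    (lightconeBasis e c)ᵀ * !![p, q; q, r] * lightconeBasis e c
      = !![1, (p - r) / 2; (p - r) / 2, 0] := by
  simp only [lightconeBasis, transpose_fin_two_of, mul_fin_two,
    EmbeddingLike.apply_eq_iff_eq, vecCons_inj, and_true]
  field_simp
  refine ⟨⟨?_, ?_⟩, ?_, ?_⟩
  · linear_combination r * he - hc2 - hnull
  · linear_combination -r * he
  · linear_combination -r * he
  · linear_combination c ^ 2 * (hnull + r * he)

end lightconeBasis

/-- Theorem 3.4: if `(tr F)² = 4 det F` and `G₀₀ + G₁₁ > 0` (i.e. `σ = 1`), then in a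
suitable basis the metrics are presented by `(0, 1; 1, 0)` and `(1, a; a, 0)`. -/
theorem canonical_form_sigma_pos (G : Matrix (Fin 2) (Fin 2) ℝ) (hG : Gᵀ = G)
    (F : Matrix (Fin 2) (Fin 2) ℝ) (hF : F = Jmat * G)
    (h : F.trace ^ 2 = 4 * F.det) (hσ : G 0 0 + G 1 1 > 0) :
    ∃ S : Matrix (Fin 2) (Fin 2) ℝ, ∃ a : ℝ, IsUnit S ∧
      Sᵀ * Jmat * S = !![0, 1; 1, 0] ∧ Sᵀ * G * S = !![1, a; a, 0] := by
  obtain ⟨p, q, r, rfl⟩ := IsSymm.exists_eq_fin_two hG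
  subst hF
  have hpr : 0 < p + r := hσ
  have hsq : (p + r) ^ 2 = (2 * q) ^ 2 := by
    linarith [trace_sq_sub_four_det_Jmat_mul p q r]
  obtain ⟨e, he, hnull⟩ : ∃ e : ℝ, e ^ 2 = 1 ∧ p + r = 2 * e * q := by
    rcases sq_eq_sq_iff_eq_or_eq_neg.mp hsq with hpos | hneg
    · exact ⟨1, by norm_num, by linarith⟩
    · exact ⟨-1, by norm_num, by linarith⟩
  set c := √(2 * (p + r))
  have hc2 : c ^ 2 = 2 * (p + r) := Real.sq_sqrt (by linarith)
  have hc : c ≠ 0 := (Real.sqrt_pos.mpr (by linarith)).ne'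
  exact ⟨lightconeBasis e c, (p - r) / 2, isUnit_lightconeBasis he hc,
    lightconeBasis_transpose_mul_Jmat_mul he hc, lightconeBasis_transpose_mul_mul he hc hc2 hnull⟩
end

section
/- Theorem 3.5: Let G be a symmetric 2×2 real matrix and F = J · G the matrix of the associated operator. If (tr F)² = 4·det F and G₀₀ + G₁₁ < 0, then there exist an invertible 2×2 real matrix S and a real number a such that Sᵀ · J · S is the matrix with rows (0, 1) and (1, 0), and Sᵀ · G · S is the matrix with rows (0, a) and (a, −1). -/
open Matrix

private lemma tr2 (a b c d : ℝ) : (!![a, b; c, d])ᵀ = !![a, c; b, d] := by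
  ext i j; fin_cases i <;> fin_cases j <;> rfl

private lemma ext2 {a b c d a' b' c' d' : ℝ} (h1 : a = a') (h2 : b = b')
    (h3 : c = c') (h4 : d = d') : !![a, b; c, d] = !![a', b'; c', d'] := by
  subst h1 h2 h3 h4; rfl

/-- Theorem 3.5: if `(tr F)² = 4 det F` and `G₀₀ + G₁₁ < 0` (i.e. `σ = -1`), then in a
suitable basis the metrics are presented by `(0, 1; 1, 0)` and `(0, a; a, -1)`. -/
theorem canonical_form_sigma_neg (G : Matrix (Fin 2) (Fin 2) ℝ) (hG : Gᵀ = G)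
    (F : Matrix (Fin 2) (Fin 2) ℝ) (hF : F = Jmat * G)
    (h : F.trace ^ 2 = 4 * F.det) (hσ : G 0 0 + G 1 1 < 0) :
    ∃ S : Matrix (Fin 2) (Fin 2) ℝ, ∃ a : ℝ, IsUnit S ∧
      Sᵀ * Jmat * S = !![0, 1; 1, 0] ∧ Sᵀ * G * S = !![0, a; a, -1] := by
  have hsym : G 1 0 = G 0 1 := congrFun (congrFun hG 0) 1
  set p := G 0 0 with hp
  set q := G 0 1 with hq
  set r := G 1 1 with hr
  have hGe : G = !![p, q; q, r] := by
    rw [Matrix.eta_fin_two G, hsym]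
  have hkey : (p + r) ^ 2 = 4 * q ^ 2 := by
    subst hF
    rw [hGe] at h
    simp [Jmat, Matrix.mul_fin_two, Matrix.trace_fin_two_of, Matrix.det_fin_two_of] at h
    nlinarith [h]
  set s := Real.sqrt (-2 * (p + r)) with hsdef
  have hs2 : s ^ 2 = -2 * (p + r) := Real.sq_sqrt (by linarith)
  have hspos : 0 < s := Real.sqrt_pos.mpr (by linarith)
  have hsne : s ≠ 0 := ne_of_gt hspos
  have hcases : (2 * q - (p + r)) * (2 * q + (p + r)) = 0 := by nlinarith
  rcases mul_eq_zero.mp hcases with hc | hc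
  · -- q = (p+r)/2, use S = !![s/2, s⁻¹; -s/2, s⁻¹]
    refine ⟨!![s/2, s⁻¹; -(s/2), s⁻¹], (p - r) / 2, ?_, ?_, ?_⟩
    · rw [Matrix.isUnit_iff_isUnit_det, Matrix.det_fin_two_of]
      have hdet : s / 2 * s⁻¹ - s⁻¹ * -(s / 2) = 1 := by field_simp; ring
      rw [hdet]; exact isUnit_one
    · rw [tr2, Jmat, Matrix.mul_fin_two, Matrix.mul_fin_two]
      refine ext2 ?_ ?_ ?_ ?_ <;> field_simp <;> ring
    · rw [hGe, tr2, Matrix.mul_fin_two, Matrix.mul_fin_two]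
      refine ext2 ?_ ?_ ?_ ?_ <;> field_simp
      · linear_combination (-(s*s)) * hc
      · ring
      · ring
      · linear_combination hc + hs2
  · -- q = -(p+r)/2, use S = !![s/2, s⁻¹; s/2, -s⁻¹]
    refine ⟨!![s/2, s⁻¹; s/2, -(s⁻¹)], (p - r) / 2, ?_, ?_, ?_⟩
    · rw [Matrix.isUnit_iff_isUnit_det, Matrix.det_fin_two_of]
      have hdet : s / 2 * -s⁻¹ - s⁻¹ * (s / 2) = -1 := by field_simp; ring
      rw [hdet]; exact isUnit_one.neg
    · rw [tr2, Jmat, Matrix.mul_fin_two, Matrix.mul_fin_two]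
      refine ext2 ?_ ?_ ?_ ?_ <;> field_simp <;> ring
    · rw [hGe, tr2, Matrix.mul_fin_two, Matrix.mul_fin_two]
      refine ext2 ?_ ?_ ?_ ?_ <;> field_simp
      · linear_combination (s*s) * hc
      · ring
      · ring
      · linear_combination hs2 - hc
end

section
/- Classification theorem (table 4.1): Let G be any symmetric 2×2 real matrix. Then there exists an invertible 2×2 real matrix S such that the pair (Sᵀ · J · S, Sᵀ · G · S) has one of the following five canonical forms, for some real numbers a, b: (i) (diag(1,−1), diag(a,b)) with a + b ≠ 0; (ii) (diag(1,−1), matrix with rows (a,b),(b,−a)) with b ≠ 0; (iii) (diag(1,−1), diag(a,−a)); (iv) (matrix with rows (0,1),(1,0), matrix with rows (1,a),(a,0)); (v) (matrix with rows (0,1),(1,0), matrix with rows (0,a),(a,−1)). -/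
open Matrix

lemma trans_fin_two (x y z w : ℝ) : (!![x,y;z,w])ᵀ = !![x,z;y,w] := by
  ext i j; fin_cases i <;> fin_cases j <;> rfl

lemma conj_fin_two (x y z w m00 m01 m10 m11 : ℝ) :
    (!![x,y;z,w])ᵀ * !![m00,m01;m10,m11] * !![x,y;z,w] =
    !![x*m00*x + x*m01*z + z*m10*x + z*m11*z, x*m00*y + x*m01*w + z*m10*y + z*m11*w;
       y*m00*x + y*m01*z + w*m10*x + w*m11*z, y*m00*y + y*m01*w + w*m10*y + w*m11*w] := by
  rw [trans_fin_two, Matrix.mul_fin_two, Matrix.mul_fin_two]; ring_nf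

lemma eq22 {a b c d a' b' c' d' : ℝ} (h1 : a = a') (h2 : b = b') (h3 : c = c')
    (h4 : d = d') : !![a,b;c,d] = !![a',b';c',d'] := by rw [h1,h2,h3,h4]

lemma unit22 {x y z w : ℝ} (h : x*w - y*z ≠ 0) : IsUnit (!![x,y;z,w]) := by
  rw [Matrix.isUnit_iff_isUnit_det, Matrix.det_fin_two_of, isUnit_iff_ne_zero]
  exact h

lemma exists_c (k : ℝ) (h1k : (0:ℝ) < 1 - k^2) : ∃ c : ℝ, c^2 * (1-k^2) = 1 := by
  refine ⟨(Real.sqrt (1-k^2))⁻¹, ?_⟩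
  rw [inv_pow, Real.sq_sqrt h1k.le]
  exact inv_mul_cancel₀ (ne_of_gt h1k)

/-- Classification theorem (table 4.1): for any symmetric `2×2` real matrix `G` there is an
invertible `S` bringing the pair `(J, G)` to one of the five canonical forms. -/
theorem classification_of_metric_pairs (G : Matrix (Fin 2) (Fin 2) ℝ) (hG : Gᵀ = G) :
    ∃ S : Matrix (Fin 2) (Fin 2) ℝ, IsUnit S ∧ ∃ a b : ℝ,
      (Sᵀ * Jmat * S = !![1, 0; 0, -1] ∧ Sᵀ * G * S = !![a, 0; 0, b] ∧ a + b ≠ 0) ∨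
      (Sᵀ * Jmat * S = !![1, 0; 0, -1] ∧ Sᵀ * G * S = !![a, b; b, -a] ∧ b ≠ 0) ∨
      (Sᵀ * Jmat * S = !![1, 0; 0, -1] ∧ Sᵀ * G * S = !![a, 0; 0, -a]) ∨
      (Sᵀ * Jmat * S = !![0, 1; 1, 0] ∧ Sᵀ * G * S = !![1, a; a, 0]) ∨
      (Sᵀ * Jmat * S = !![0, 1; 1, 0] ∧ Sᵀ * G * S = !![0, a; a, -1]) := by
  have h10 : G 1 0 = G 0 1 := congrFun (congrFun hG 0) 1
  obtain ⟨p, q, r, hGe⟩ : ∃ p q r : ℝ, G = !![p,q;q,r] :=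
    ⟨G 0 0, G 0 1, G 1 1, by ext i j; fin_cases i <;> fin_cases j <;> simp [h10]⟩
  have hJ : Jmat = !![(1:ℝ),0;0,-1] := rfl
  rcases lt_trichotomy ((p+r)^2) (4*q^2) with hlt | heq | hgt
  · -- case (ii): boost to !![a, b; b, -a], b ≠ 0
    have hq0 : q ≠ 0 := by intro h0; rw [h0] at hlt; nlinarith [sq_nonneg (p+r)]
    have key : ∃ k : ℝ, k^2 < 1 ∧ (p+r)*k^2 + 4*q*k + (p+r) = 0 := by
      have hdnn : (0:ℝ) ≤ 4*q^2 - (p+r)^2 := by linarith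
      set d := Real.sqrt (4*q^2 - (p+r)^2) with hddef
      have hd : d^2 = 4*q^2 - (p+r)^2 := Real.sq_sqrt hdnn
      have hd0 : 0 ≤ d := Real.sqrt_nonneg _
      rcases lt_or_gt_of_ne hq0 with hqneg | hqpos
      · have hw : 2*q - d < 0 := by nlinarith
        have hw0 : 2*q - d ≠ 0 := ne_of_lt hw
        refine ⟨-(p+r)/(2*q - d), ?_, ?_⟩
        · rw [div_pow, div_lt_one (by positivity)]
          nlinarith [mul_nonneg (neg_nonneg.mpr hqneg.le) hd0]
        · have hkw : (-(p+r)/(2*q - d))*(2*q - d) = -(p+r) := by field_simp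
          have hz : ((p+r)*(-(p+r)/(2*q - d))^2 + 4*q*(-(p+r)/(2*q - d)) + (p+r)) * (2*q-d)^2 = 0 := by
            linear_combination ((p+r)*((-(p+r)/(2*q - d))*(2*q-d)) - (p+r)^2 + 4*q*(2*q-d)) * hkw + (p+r) * hd
          exact (mul_eq_zero.mp hz).resolve_right (pow_ne_zero 2 hw0)
      · have hw : 0 < 2*q + d := by nlinarith
        have hw0 : 2*q + d ≠ 0 := ne_of_gt hw
        refine ⟨-(p+r)/(2*q + d), ?_, ?_⟩
        · rw [div_pow, div_lt_one (by positivity)]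
          nlinarith [mul_nonneg hqpos.le hd0]
        · have hkw : (-(p+r)/(2*q + d))*(2*q + d) = -(p+r) := by field_simp
          have hz : ((p+r)*(-(p+r)/(2*q + d))^2 + 4*q*(-(p+r)/(2*q + d)) + (p+r)) * (2*q+d)^2 = 0 := by
            linear_combination ((p+r)*((-(p+r)/(2*q + d))*(2*q+d)) - (p+r)^2 + 4*q*(2*q+d)) * hkw + (p+r) * hd
          exact (mul_eq_zero.mp hz).resolve_right (pow_ne_zero 2 hw0)
    obtain ⟨k, hk, hroot⟩ := key
    have h1k : (0:ℝ) < 1 - k^2 := by nlinarith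
    obtain ⟨c, hc⟩ := exists_c k h1k
    refine ⟨!![c, k*c; k*c, c], unit22 (by intro h; nlinarith [hc]),
      c*p*c + c*q*(k*c) + (k*c)*q*c + (k*c)*r*(k*c),
      c*p*(k*c) + c*q*c + (k*c)*q*(k*c) + (k*c)*r*c,
      Or.inr (Or.inl ⟨?_, ?_, ?_⟩)⟩
    · rw [hJ, conj_fin_two]
      exact eq22 (by linear_combination hc) (by ring) (by ring) (by linear_combination -hc)
    · rw [hGe, conj_fin_two]
      exact eq22 rfl rfl (by ring) (by linear_combination c^2 * hroot)
    · intro hb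
      have key2 : (c*p*(k*c) + c*q*c + (k*c)*q*(k*c) + (k*c)*r*c)*(1+k^2)
          = q*((1-k^2)^2*c^2) := by linear_combination (k*c^2)*hroot
      rw [hb, zero_mul] at key2
      have hcpos : 0 < c^2 := by nlinarith [hc]
      rcases mul_eq_zero.mp key2.symm with h'|h'
      · exact hq0 h'
      · nlinarith [h']
  · -- case (p+r)^2 = 4q^2 : degenerate cases
    rcases eq_or_ne q 0 with hq0 | hq0
    · -- case (iii)
      have h0 : (p+r)^2 = 0 := by rw [hq0] at heq; linarith
      have hr : p + r = 0 := by
        have := pow_eq_zero_iff (n := 2) (by norm_num) |>.mp h0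
        exact this
      refine ⟨1, isUnit_one, p, 0, Or.inr (Or.inr (Or.inl ⟨?_, ?_⟩))⟩
      · rw [Matrix.transpose_one, one_mul, mul_one]; exact hJ
      · rw [Matrix.transpose_one, one_mul, mul_one, hGe, hq0]
        exact eq22 rfl rfl rfl (by linarith)
    · have hfac : (p+r-2*q)*(p+r+2*q) = 0 := by linear_combination heq
      rcases mul_eq_zero.mp hfac with h2q | h2q
      · -- p + r = 2q
        have h2q : p + r = 2*q := by linarith
        rcases lt_or_gt_of_ne hq0 with hqneg | hqpos
        · -- B1 : case (v)
          obtain ⟨e, he0, he⟩ : ∃ e : ℝ, 0 < e ∧ e^2 = -q :=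
            ⟨Real.sqrt (-q), Real.sqrt_pos.mpr (by linarith), Real.sq_sqrt (by linarith)⟩
          obtain ⟨m, hm⟩ : ∃ m : ℝ, 2*m*e = 1 := ⟨(2*e)⁻¹, by field_simp⟩
          refine ⟨!![e, m; -e, m], unit22 (by intro h; nlinarith [hm]), (p-r)/2, 0,
            Or.inr (Or.inr (Or.inr (Or.inr ⟨?_, ?_⟩)))⟩
          · rw [hJ, conj_fin_two]
            exact eq22 (by ring) (by linear_combination hm) (by linear_combination hm) (by ring)
          · rw [hGe, conj_fin_two]
            exact eq22 (by linear_combination e^2*h2q) (by linear_combination ((p-r)/2)*hm)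
              (by linear_combination ((p-r)/2)*hm)
              (by linear_combination m^2*h2q - (2*m*e+1)*hm + 4*m^2*he)
        · -- A1 : case (iv)
          obtain ⟨e, he0, he⟩ : ∃ e : ℝ, 0 < e ∧ e^2 = q :=
            ⟨Real.sqrt q, Real.sqrt_pos.mpr hqpos, Real.sq_sqrt hqpos.le⟩
          obtain ⟨m, hm⟩ : ∃ m : ℝ, 2*m*e = 1 := ⟨(2*e)⁻¹, by field_simp⟩
          refine ⟨!![m, e; m, -e], unit22 (by intro h; nlinarith [hm]), (p-r)/2, 0,
            Or.inr (Or.inr (Or.inr (Or.inl ⟨?_, ?_⟩)))⟩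
          · rw [hJ, conj_fin_two]
            exact eq22 (by ring) (by linear_combination hm) (by linear_combination hm) (by ring)
          · rw [hGe, conj_fin_two]
            exact eq22 (by linear_combination m^2*h2q + (2*m*e+1)*hm - 4*m^2*he)
              (by linear_combination ((p-r)/2)*hm) (by linear_combination ((p-r)/2)*hm)
              (by linear_combination e^2*h2q)
      · -- p + r = -2q
        have h2q : p + r = -(2*q) := by linarith
        rcases lt_or_gt_of_ne hq0 with hqneg | hqpos
        · -- B2 : case (iv)
          obtain ⟨e, he0, he⟩ : ∃ e : ℝ, 0 < e ∧ e^2 = -q :=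
            ⟨Real.sqrt (-q), Real.sqrt_pos.mpr (by linarith), Real.sq_sqrt (by linarith)⟩
          obtain ⟨m, hm⟩ : ∃ m : ℝ, 2*m*e = 1 := ⟨(2*e)⁻¹, by field_simp⟩
          refine ⟨!![m, e; -m, e], unit22 (by intro h; nlinarith [hm]), (p-r)/2, 0,
            Or.inr (Or.inr (Or.inr (Or.inl ⟨?_, ?_⟩)))⟩
          · rw [hJ, conj_fin_two]
            exact eq22 (by ring) (by linear_combination hm) (by linear_combination hm) (by ring)
          · rw [hGe, conj_fin_two]
            exact eq22 (by linear_combination m^2*h2q + (2*m*e+1)*hm - 4*m^2*he)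
              (by linear_combination ((p-r)/2)*hm) (by linear_combination ((p-r)/2)*hm)
              (by linear_combination e^2*h2q)
        · -- A2 : case (v)
          obtain ⟨e, he0, he⟩ : ∃ e : ℝ, 0 < e ∧ e^2 = q :=
            ⟨Real.sqrt q, Real.sqrt_pos.mpr hqpos, Real.sq_sqrt hqpos.le⟩
          obtain ⟨m, hm⟩ : ∃ m : ℝ, 2*m*e = 1 := ⟨(2*e)⁻¹, by field_simp⟩
          refine ⟨!![e, m; e, -m], unit22 (by intro h; nlinarith [hm]), (p-r)/2, 0,
            Or.inr (Or.inr (Or.inr (Or.inr ⟨?_, ?_⟩)))⟩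
          · rw [hJ, conj_fin_two]
            exact eq22 (by ring) (by linear_combination hm) (by linear_combination hm) (by ring)
          · rw [hGe, conj_fin_two]
            exact eq22 (by linear_combination e^2*h2q) (by linear_combination ((p-r)/2)*hm)
              (by linear_combination ((p-r)/2)*hm)
              (by linear_combination m^2*h2q - (2*m*e+1)*hm + 4*m^2*he)
  · -- case (i): boost to diagonal
    have ht0 : p + r ≠ 0 := by intro h0; rw [h0] at hgt; nlinarith [sq_nonneg q]
    have key : ∃ k : ℝ, k^2 < 1 ∧ q*k^2 + (p+r)*k + q = 0 := by
      have hdnn : (0:ℝ) ≤ (p+r)^2 - 4*q^2 := by linarith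
      set d := Real.sqrt ((p+r)^2 - 4*q^2) with hddef
      have hd : d^2 = (p+r)^2 - 4*q^2 := Real.sq_sqrt hdnn
      have hd0 : 0 ≤ d := Real.sqrt_nonneg _
      rcases lt_or_gt_of_ne ht0 with htneg | htpos
      · have hw : p+r-d < 0 := by nlinarith
        have hw0 : p+r-d ≠ 0 := ne_of_lt hw
        refine ⟨-(2*q)/(p+r-d), ?_, ?_⟩
        · rw [div_pow, div_lt_one (by positivity)]
          nlinarith [mul_nonneg (neg_nonneg.mpr htneg.le) hd0]
        · have hkw : (-(2*q)/(p+r-d))*(p+r-d) = -(2*q) := by field_simp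
          have hz : (q*(-(2*q)/(p+r-d))^2 + (p+r)*(-(2*q)/(p+r-d)) + q) * (p+r-d)^2 = 0 := by
            linear_combination (q*((-(2*q)/(p+r-d))*(p+r-d)) - 2*q^2 + (p+r)*(p+r-d)) * hkw + q * hd
          exact (mul_eq_zero.mp hz).resolve_right (pow_ne_zero 2 hw0)
      · have hw : 0 < p+r+d := by nlinarith
        have hw0 : p+r+d ≠ 0 := ne_of_gt hw
        refine ⟨-(2*q)/(p+r+d), ?_, ?_⟩
        · rw [div_pow, div_lt_one (by positivity)]
          nlinarith [mul_nonneg htpos.le hd0]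
        · have hkw : (-(2*q)/(p+r+d))*(p+r+d) = -(2*q) := by field_simp
          have hz : (q*(-(2*q)/(p+r+d))^2 + (p+r)*(-(2*q)/(p+r+d)) + q) * (p+r+d)^2 = 0 := by
            linear_combination (q*((-(2*q)/(p+r+d))*(p+r+d)) - 2*q^2 + (p+r)*(p+r+d)) * hkw + q * hd
          exact (mul_eq_zero.mp hz).resolve_right (pow_ne_zero 2 hw0)
    obtain ⟨k, hk, hroot⟩ := key
    have h1k : (0:ℝ) < 1 - k^2 := by nlinarith
    obtain ⟨c, hc⟩ := exists_c k h1k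
    refine ⟨!![c, k*c; k*c, c], unit22 (by intro h; nlinarith [hc]),
      c*p*c + c*q*(k*c) + (k*c)*q*c + (k*c)*r*(k*c),
      (k*c)*p*(k*c) + (k*c)*q*c + c*q*(k*c) + c*r*c,
      Or.inl ⟨?_, ?_, ?_⟩⟩
    · rw [hJ, conj_fin_two]
      exact eq22 (by linear_combination hc) (by ring) (by ring) (by linear_combination -hc)
    · rw [hGe, conj_fin_two]
      exact eq22 rfl (by linear_combination c^2 * hroot) (by linear_combination c^2 * hroot) rfl
    · intro hab
      have key2 : ((c*p*c + c*q*(k*c) + (k*c)*q*c + (k*c)*r*(k*c)) +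
          ((k*c)*p*(k*c) + (k*c)*q*c + c*q*(k*c) + c*r*c))*(1+k^2)
          = (p+r)*((1-k^2)^2*c^2) := by linear_combination (4*k*c^2)*hroot
      rw [hab, zero_mul] at key2
      have hcpos : 0 < c^2 := by nlinarith [hc]
      rcases mul_eq_zero.mp key2.symm with h'|h'
      · exact ht0 h'
      · nlinarith [h']
end
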